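/- Let $E$ be a Hausdorff complete pseudo-$H$-space, i.e., a real or complex vector space equipped with a family $(\langle\cdot,\cdot\rangle_\alpha)_{\alpha\in I}$ of positive semi-definite inner products, endowed with the locally convex topology induced by the seminorms $p_\alpha(x)=\sqrt{\langle x,x\rangle_\alpha}$, which is assumed Hausdorff and complete. If $A$ and $B$ are closed linear subspaces of $E$ that are mutually orthogonal (i.e., $\langle a,b\rangle_\alpha = 0$ for all $a\in A$, $b\in B$, $\alpha\in I$), then the subspace $A + B$ is closed in $E$. -/

import Mathlib

/-! For orthogonal `a` and `b`, Pythagoras gives `p_α a ≤ p_α (a + b)` and `p_α b ≤ p_α (a + b)`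
for every `α`, so the uniform structure of `A × B` is the one induced by `(a, b) ↦ a + b`.
Since `A` and `B` are closed in a complete space, `A × B` is complete, hence so is its image
`A + B`, which is therefore closed in the Hausdorff space `E`. -/

/-- A (Hausdorff, complete) pseudo-H-space: a real or complex vector space `E` carrying a
family of positive semi-definite (pseudo-)inner products `inn α`, endowed with the topology
induced by the associated seminorms `p α x = sqrt ⟨x,x⟩_α` (expressed via `WithSeminorms`). -/
structure PseudoHSpace (𝕜 : Type*) [RCLike 𝕜] (ι E : Type*) [Nonempty ι]
    [AddCommGroup E] [Module 𝕜 E] [UniformSpace E] [IsUniformAddGroup E] where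
  inn : ι → E → E → 𝕜
  p : ι → Seminorm 𝕜 E
  inn_add_left : ∀ (α : ι) (x y z : E), inn α (x + y) z = inn α x z + inn α y z
  inn_smul_left : ∀ (α : ι) (c : 𝕜) (x y : E), inn α (c • x) y = c * inn α x y
  inn_conj_symm : ∀ (α : ι) (x y : E), (starRingEnd 𝕜) (inn α y x) = inn α x y
  inn_nonneg : ∀ (α : ι) (x : E), 0 ≤ RCLike.re (inn α x x)
  p_sq : ∀ (α : ι) (x : E), (p α x) ^ 2 = RCLike.re (inn α x x)
  topo : WithSeminorms p

open Filter Topology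

theorem WithSeminorms.tendsto_nhds_zero_of_le {𝕜 E ι F : Type*} [NormedField 𝕜]
    [AddCommGroup E] [Module 𝕜 E] [Nonempty ι] [TopologicalSpace E]
    {p : SeminormFamily 𝕜 E ι} (hp : WithSeminorms p) {u v : F → E} {l : Filter F} (huv : ∀ i x, p i (u x) ≤ p i (v x))
    (hv : Tendsto v l (𝓝 0)) : Tendsto u l (𝓝 0) := by
  rw [hp.tendsto_nhds] at hv ⊢
  intro i ε hε
  filter_upwards [hv i ε hε] with x hx
  simpa only [sub_zero] using (huv i x).trans_lt (by simpa only [sub_zero] using hx)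

namespace PseudoHSpace

variable {𝕜 ι E : Type*} [RCLike 𝕜] [Nonempty ι] [AddCommGroup E] [Module 𝕜 E]
  [UniformSpace E] [IsUniformAddGroup E] (P : PseudoHSpace 𝕜 ι E)

theorem inn_add_right (α : ι) (x y z : E) : P.inn α x (y + z) = P.inn α x y + P.inn α x z := by
  rw [← P.inn_conj_symm, P.inn_add_left, map_add, P.inn_conj_symm, P.inn_conj_symm]

theorem inn_eq_zero_symm {α : ι} {x y : E} (h : P.inn α x y = 0) : P.inn α y x = 0 := by
  rw [← P.inn_conj_symm, h, map_zero]

theorem p_add_sq_of_inn_eq_zero {α : ι} {x y : E} (h : P.inn α x y = 0) :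
    P.p α (x + y) ^ 2 = P.p α x ^ 2 + P.p α y ^ 2 := by
  rw [P.p_sq, P.p_sq, P.p_sq, P.inn_add_left, P.inn_add_right, P.inn_add_right, h,
    P.inn_eq_zero_symm h, zero_add, add_zero, map_add]

theorem p_le_p_add_of_inn_eq_zero {α : ι} {x y : E} (h : P.inn α x y = 0) :
    P.p α x ≤ P.p α (x + y) := by
  refine (pow_le_pow_iff_left₀ (apply_nonneg _ _) (apply_nonneg _ _) two_ne_zero).1 ?_
  rw [P.p_add_sq_of_inn_eq_zero h]
  exact le_add_of_nonneg_right (sq_nonneg _)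

theorem isInducing_coprod_subtype {A B : Submodule 𝕜 E}
    (horth : ∀ a ∈ A, ∀ b ∈ B, ∀ α : ι, P.inn α a b = 0) :
    IsInducing (A.subtype.coprod B.subtype) := by
  set g := A.subtype.coprod B.subtype
  have hg : Continuous g :=
    (continuous_subtype_val.comp continuous_fst).add (continuous_subtype_val.comp continuous_snd)
  refine IsTopologicalAddGroup.isInducing_iff_nhds_zero.2 (le_antisymm ?_ ?_)
  · simpa only [map_zero] using (hg.tendsto 0).le_comap
  · have hfst : ∀ α (x : A × B), P.p α x.1 ≤ P.p α (g x) := fun α x =>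
      P.p_le_p_add_of_inn_eq_zero (horth _ x.1.2 _ x.2.2 α)
    have hsnd : ∀ α (x : A × B), P.p α x.2 ≤ P.p α (g x) := fun α x => by
      simpa only [g, LinearMap.coprod_apply, Submodule.subtype_apply, add_comm] using
        P.p_le_p_add_of_inn_eq_zero (P.inn_eq_zero_symm (horth _ x.1.2 _ x.2.2 α))
    have hgl : Tendsto g (comap g (𝓝 0)) (𝓝 0) := tendsto_comap
    exact tendsto_id'.1 <| Tendsto.prodMk_nhds
      (tendsto_subtype_rng.2 (P.topo.tendsto_nhds_zero_of_le hfst hgl))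
      (tendsto_subtype_rng.2 (P.topo.tendsto_nhds_zero_of_le hsnd hgl))

end PseudoHSpace

theorem stmt1_general {𝕜 : Type*} [RCLike 𝕜] {ι E : Type*} [Nonempty ι] [AddCommGroup E] [Module 𝕜 E]
    [UniformSpace E] [IsUniformAddGroup E]
    [CompleteSpace E] [T2Space E]
    (P : PseudoHSpace 𝕜 ι E) (A B : Submodule 𝕜 E)
    (hA : IsClosed (A : Set E)) (hB : IsClosed (B : Set E))
    (horth : ∀ a ∈ A, ∀ b ∈ B, ∀ α : ι, P.inn α a b = 0) :
    IsClosed ((A ⊔ B : Submodule 𝕜 E) : Set E) := by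
  have : IsUniformAddGroup A := .comap A.subtype
  have : IsUniformAddGroup B := .comap B.subtype
  have := hA.completeSpace_coe
  have := hB.completeSpace_coe
  have hg := AddMonoidHom.isUniformInducing_of_isInducing (P.isInducing_coprod_subtype horth)
  rw [← A.range_subtype, ← B.range_subtype, ← LinearMap.range_coprod, LinearMap.coe_range]
  exact hg.isComplete_range.isClosed

/-- If `A` and `B` are mutually orthogonal closed linear subspaces of a Hausdorff complete
pseudo-H-space `E`, then `A + B` is closed. -/
theorem stmt1 {𝕜 : Type*} [RCLike 𝕜] {ι E : Type*} [Nonempty ι] [AddCommGroup E] [Module 𝕜 E]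
    [UniformSpace E] [IsUniformAddGroup E] [ContinuousSMul 𝕜 E]
    [CompleteSpace E] [T2Space E]
    (P : PseudoHSpace 𝕜 ι E) (A B : Submodule 𝕜 E)
    (hA : IsClosed (A : Set E)) (hB : IsClosed (B : Set E))
    (horth : ∀ a ∈ A, ∀ b ∈ B, ∀ α : ι, P.inn α a b = 0) :
    IsClosed ((A ⊔ B : Submodule 𝕜 E) : Set E) :=
  stmt1_general P A B hA hB horth
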